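/- arXiv:1611.04181 — 8 statements merged into one kernel-verified Lean document; each statement's English description precedes it below -/
import Mathlib

section
/- Let L be an intuitionistic linear algebra with storage and K its kernel (the range of !). Define on K: α ∧_K β := ι(e(α) ∧ e(β)), α ∨_K β := ι(e(α) ∨ e(β)), t := ι(⊤), f := ι(0), and α → β := ι(e(α) ⊸ e(β)). Then K is a Heyting algebra; in particular, the residuation law ι(a) ∧_K ι(b) ≤ ι(c) ↔ ι(b) ≤ ι(a) → ι(c) holds for all a, b, c ∈ L. -/
/-- The kernel `K` of an ILS-algebra, with the indicated operations, is a Heyting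
algebra: `ι(a ⊓ b)` is the meet, `ι(! a ⊔ ! b)` the join, `ι ⊤` the top, `ι ⊥` the
bottom, and the Heyting residuation law holds with `ι(a) → ι(c) = ι(! a ⊸ ! c)`. -/
theorem stmt8 {L : Type*} [Lattice L] [BoundedOrder L]
    (tensor : L → L → L) (one : L) (parr : L → L → L) (pbot : L) (limp : L → L → L)
    (tcomm : ∀ a b : L, tensor a b = tensor b a)
    (tassoc : ∀ a b c : L, tensor (tensor a b) c = tensor a (tensor b c))
    (tone : ∀ a : L, tensor a one = a)
    (pcomm : ∀ a b : L, parr a b = parr b a)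
    (passoc : ∀ a b c : L, parr (parr a b) c = parr a (parr b c))
    (pbotu : ∀ a : L, parr a pbot = a)
    (resid : ∀ a b c : L, tensor a b ≤ c ↔ b ≤ limp a c)
    (pmeet : ∀ a b c : L, parr a (b ⊓ c) = parr a b ⊓ parr a c)
    (ptop : ∀ a : L, parr a ⊤ = ⊤)
    (bang : L → L)
    (bmono : Monotone bang)
    (bdefl : ∀ a : L, bang a ≤ a)
    (bidem : ∀ a : L, bang a ≤ bang (bang a))
    (btensor : ∀ a b : L, tensor (bang a) (bang b) = bang (a ⊓ b))
    (btop : bang ⊤ = one) :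
    (∀ a b : L,
      IsGLB ({⟨bang a, ⟨a, rfl⟩⟩, ⟨bang b, ⟨b, rfl⟩⟩} : Set {x : L // ∃ y, bang y = x})
        ⟨bang (bang a ⊓ bang b), ⟨bang a ⊓ bang b, rfl⟩⟩) ∧
    (∀ a b : L,
      IsLUB ({⟨bang a, ⟨a, rfl⟩⟩, ⟨bang b, ⟨b, rfl⟩⟩} : Set {x : L // ∃ y, bang y = x})
        ⟨bang (bang a ⊔ bang b), ⟨bang a ⊔ bang b, rfl⟩⟩) ∧
    (∀ α : {x : L // ∃ y, bang y = x}, α ≤ ⟨bang ⊤, ⟨⊤, rfl⟩⟩) ∧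
    (∀ α : {x : L // ∃ y, bang y = x},
      (⟨bang ⊥, ⟨(⊥ : L), rfl⟩⟩ : {x : L // ∃ y, bang y = x}) ≤ α) ∧
    (∀ a b c : L,
      bang (bang a ⊓ bang b) ≤ bang c ↔ bang b ≤ bang (limp (bang a) (bang c))) := by
  have bfix : ∀ y : L, bang (bang y) = bang y := fun y => le_antisymm (bdefl _) (bidem y)
  refine ⟨?_, ?_, ?_, ?_, ?_⟩
  · intro a b
    constructor
    · rintro z (rfl | rfl)
      · exact (bdefl _).trans inf_le_left
      · exact (bdefl _).trans inf_le_right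
    · rintro ⟨x, y, rfl⟩ hx
      have h1 : bang y ≤ bang a := hx (Set.mem_insert _ _)
      have h2 : bang y ≤ bang b := hx (Set.mem_insert_of_mem _ rfl)
      calc bang y = bang (bang y) := (bfix y).symm
        _ ≤ bang (bang a ⊓ bang b) := bmono (le_inf h1 h2)
  · intro a b
    constructor
    · rintro z (rfl | rfl)
      · calc bang a = bang (bang a) := (bfix a).symm
          _ ≤ bang (bang a ⊔ bang b) := bmono le_sup_left
      · calc bang b = bang (bang b) := (bfix b).symm
          _ ≤ bang (bang a ⊔ bang b) := bmono le_sup_right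
    · rintro ⟨x, y, rfl⟩ hx
      have h1 : bang a ≤ bang y := hx (Set.mem_insert _ _)
      have h2 : bang b ≤ bang y := hx (Set.mem_insert_of_mem _ rfl)
      calc bang (bang a ⊔ bang b) ≤ bang (bang y) := bmono (sup_le h1 h2)
        _ = bang y := bfix y
  · rintro ⟨x, y, rfl⟩
    exact bmono le_top
  · rintro ⟨x, y, rfl⟩
    exact (bdefl ⊥).trans bot_le
  · intro a b c
    have key : bang (bang a ⊓ bang b) = tensor (bang a) (bang b) := by
      rw [← btensor (bang a) (bang b), bfix, bfix]
    rw [key, resid]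
    constructor
    · intro h
      rw [← bfix b]
      exact bmono h
    · intro h
      exact h.trans (bdefl _)
end

section
/- In any intuitionistic linear algebra with storage and co-storage, the following are equivalent: (a) for all a, b, c, if ! a ⊗ b ≤ ? c then ! a ⊗ ? b ≤ ? c; (b) for all a, b, c, if b ≤ ! a ⊸ ? c then ? b ≤ ! a ⊸ ? c; (c) for all a, b, ?(! a ⊸ ? b) = ! a ⊸ ? b. -/
/-- Equivalence of the three promotion-type conditions in any ILSC-algebra. -/
theorem stmt11 {L : Type*} [Lattice L] [BoundedOrder L]
    (tensor : L → L → L) (one : L) (parr : L → L → L) (pbot : L) (limp : L → L → L)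
    (tcomm : ∀ a b : L, tensor a b = tensor b a)
    (tassoc : ∀ a b c : L, tensor (tensor a b) c = tensor a (tensor b c))
    (tone : ∀ a : L, tensor a one = a)
    (pcomm : ∀ a b : L, parr a b = parr b a)
    (passoc : ∀ a b c : L, parr (parr a b) c = parr a (parr b c))
    (pbotu : ∀ a : L, parr a pbot = a)
    (resid : ∀ a b c : L, tensor a b ≤ c ↔ b ≤ limp a c)
    (pmeet : ∀ a b c : L, parr a (b ⊓ c) = parr a b ⊓ parr a c)
    (ptop : ∀ a : L, parr a ⊤ = ⊤)
    (bang : L → L)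
    (bmono : Monotone bang)
    (bdefl : ∀ a : L, bang a ≤ a)
    (bidem : ∀ a : L, bang a ≤ bang (bang a))
    (btensor : ∀ a b : L, tensor (bang a) (bang b) = bang (a ⊓ b))
    (btop : bang ⊤ = one)
    (quest : L → L)
    (qmono : Monotone quest)
    (qinfl : ∀ a : L, a ≤ quest a)
    (qidem : ∀ a : L, quest (quest a) ≤ quest a)
    (qparr : ∀ a b : L, parr (quest a) (quest b) = quest (a ⊔ b))
    (qbot : quest ⊥ = pbot) :
    ((∀ a b c : L, tensor (bang a) b ≤ quest c → tensor (bang a) (quest b) ≤ quest c) ↔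
      (∀ a b c : L, b ≤ limp (bang a) (quest c) → quest b ≤ limp (bang a) (quest c))) ∧
    ((∀ a b c : L, b ≤ limp (bang a) (quest c) → quest b ≤ limp (bang a) (quest c)) ↔
      (∀ a b : L, quest (limp (bang a) (quest b)) = limp (bang a) (quest b))) := by
  constructor
  · constructor
    · intro h a b c hb
      exact (resid _ _ _).mp (h a b c ((resid _ _ _).mpr hb))
    · intro h a b c hb
      exact (resid _ _ _).mpr (h a b c ((resid _ _ _).mp hb))
  · constructor
    · intro h a b
      exact le_antisymm (h a _ b le_rfl) (qinfl _)
    · intro h a b c hb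
      calc quest b ≤ quest (limp (bang a) (quest c)) := qmono hb
        _ = limp (bang a) (quest c) := h a c
end

section
/- In any bi-intuitionistic linear algebra with storage and co-storage, the following are equivalent: (a) for all a, b, c, if ! a ≤ b ⅋ ? c then ! a ≤ ! b ⅋ ? c; (b) for all a, b, c, if ? c ⊸• ! a ≤ b then ? c ⊸• ! a ≤ ! b; (c) for all a, b, !(? b ⊸• ! a) = ? b ⊸• ! a; where ⊸• denotes linear co-implication. -/
/-- Equivalence of the three co-promotion-type conditions in any BLSC-algebra,
where `cimp` is the linear co-implication (left residual of `⅋`). -/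
theorem stmt12 {L : Type*} [Lattice L] [BoundedOrder L]
    (tensor : L → L → L) (one : L) (parr : L → L → L) (pbot : L)
    (limp : L → L → L) (cimp : L → L → L)
    (tcomm : ∀ a b : L, tensor a b = tensor b a)
    (tassoc : ∀ a b c : L, tensor (tensor a b) c = tensor a (tensor b c))
    (tone : ∀ a : L, tensor a one = a)
    (pcomm : ∀ a b : L, parr a b = parr b a)
    (passoc : ∀ a b c : L, parr (parr a b) c = parr a (parr b c))
    (pbotu : ∀ a : L, parr a pbot = a)
    (resid : ∀ a b c : L, tensor a b ≤ c ↔ b ≤ limp a c)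
    (pmeet : ∀ a b c : L, parr a (b ⊓ c) = parr a b ⊓ parr a c)
    (ptop : ∀ a : L, parr a ⊤ = ⊤)
    (coresid : ∀ a b c : L, cimp a b ≤ c ↔ b ≤ parr a c)
    (bang : L → L)
    (bmono : Monotone bang)
    (bdefl : ∀ a : L, bang a ≤ a)
    (bidem : ∀ a : L, bang a ≤ bang (bang a))
    (btensor : ∀ a b : L, tensor (bang a) (bang b) = bang (a ⊓ b))
    (btop : bang ⊤ = one)
    (quest : L → L)
    (qmono : Monotone quest)
    (qinfl : ∀ a : L, a ≤ quest a)
    (qidem : ∀ a : L, quest (quest a) ≤ quest a)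
    (qparr : ∀ a b : L, parr (quest a) (quest b) = quest (a ⊔ b))
    (qbot : quest ⊥ = pbot) :
    ((∀ a b c : L, bang a ≤ parr b (quest c) → bang a ≤ parr (bang b) (quest c)) ↔
      (∀ a b c : L, cimp (quest c) (bang a) ≤ b → cimp (quest c) (bang a) ≤ bang b)) ∧
    ((∀ a b c : L, cimp (quest c) (bang a) ≤ b → cimp (quest c) (bang a) ≤ bang b) ↔
      (∀ a b : L, bang (cimp (quest b) (bang a)) = cimp (quest b) (bang a))) := by
  constructor
  · constructor
    · intro h a b c hle
      rw [coresid]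
      rw [coresid, pcomm] at hle
      rw [← pcomm]
      exact h a b c hle
    · intro h a b c hle
      rw [pcomm, ← coresid] at hle
      rw [pcomm, ← coresid]
      exact h a b c hle
  · constructor
    · intro h a b
      exact le_antisymm (bdefl _) (h a _ b le_rfl)
    · intro h a b c hle
      calc cimp (quest c) (bang a) = bang (cimp (quest c) (bang a)) := (h a c).symm
        _ ≤ bang b := bmono hle
end

section
/- In any paired intuitionistic linear algebra (an ILSC-algebra satisfying !(a ⊸ b) ≤ ? a ⊸ ? b for all a, b), the identity ?(! a ⊸ ? b) = ! a ⊸ ? b holds for all a, b. -/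
/-- In any ILP-algebra (ILSC-algebra with the pairing axiom `!(a ⊸ b) ≤ ?a ⊸ ?b`),
the identity `?(! a ⊸ ? b) = ! a ⊸ ? b` holds. -/
theorem stmt13 {L : Type*} [Lattice L] [BoundedOrder L]
    (tensor : L → L → L) (one : L) (parr : L → L → L) (pbot : L) (limp : L → L → L)
    (tcomm : ∀ a b : L, tensor a b = tensor b a)
    (tassoc : ∀ a b c : L, tensor (tensor a b) c = tensor a (tensor b c))
    (tone : ∀ a : L, tensor a one = a)
    (pcomm : ∀ a b : L, parr a b = parr b a)
    (passoc : ∀ a b c : L, parr (parr a b) c = parr a (parr b c))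
    (pbotu : ∀ a : L, parr a pbot = a)
    (resid : ∀ a b c : L, tensor a b ≤ c ↔ b ≤ limp a c)
    (pmeet : ∀ a b c : L, parr a (b ⊓ c) = parr a b ⊓ parr a c)
    (ptop : ∀ a : L, parr a ⊤ = ⊤)
    (bang : L → L)
    (bmono : Monotone bang)
    (bdefl : ∀ a : L, bang a ≤ a)
    (bidem : ∀ a : L, bang a ≤ bang (bang a))
    (btensor : ∀ a b : L, tensor (bang a) (bang b) = bang (a ⊓ b))
    (btop : bang ⊤ = one)
    (quest : L → L)
    (qmono : Monotone quest)
    (qinfl : ∀ a : L, a ≤ quest a)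
    (qidem : ∀ a : L, quest (quest a) ≤ quest a)
    (qparr : ∀ a b : L, parr (quest a) (quest b) = quest (a ⊔ b))
    (qbot : quest ⊥ = pbot)
    (pair : ∀ a b : L, bang (limp a b) ≤ limp (quest a) (quest b)) :
    ∀ a b : L, quest (limp (bang a) (quest b)) = limp (bang a) (quest b) := by
  intro a b
  set X := limp (bang a) (quest b) with hX
  -- ev : tensor u (limp u c) ≤ c
  have ev : ∀ u c : L, tensor u (limp u c) ≤ c := fun u c => (resid u (limp u c) c).mpr le_rfl
  -- limp monotone in second arg
  have lmono : ∀ u {c d : L}, c ≤ d → limp u c ≤ limp u d := fun u c d h =>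
    (resid u _ _).mp ((ev u c).trans h)
  refine le_antisymm ?_ (qinfl X)
  -- !a ≤ X ⊸ ?b
  have h1 : bang a ≤ limp X (quest b) := by
    rw [← resid, tcomm]; exact ev (bang a) (quest b)
  have h2 : bang a ≤ bang (limp X (quest b)) := (bidem a).trans (bmono h1)
  have h3 : bang a ≤ limp (quest X) (quest b) :=
    h2.trans ((pair X (quest b)).trans (lmono _ (qidem b)))
  have h4 : tensor (bang a) (quest X) ≤ quest b := by
    rw [tcomm]; exact (resid _ _ _).mpr h3
  exact (resid _ _ _).mp h4
end

section
/- Let (L, A, e, ι) be a heterogeneous ILS-algebra. Define ! : L → L by ! a := e(ι(a)). Then (L, !) is an intuitionistic linear algebra with storage: ! is monotone, ! a ≤ a, ! a ≤ ! ! a, !(a ∧ b) = ! a ⊗ ! b, and ! ⊤ = 1. -/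
/-- From a heterogeneous ILS-algebra `(L, A, e, ι)`, defining `! a := e (ι a)` yields
an ILS-algebra structure on `L`. -/
theorem stmt14 {L : Type*} [Lattice L] [BoundedOrder L] {A : Type*} [HeytingAlgebra A]
    (tensor : L → L → L) (one : L) (limp : L → L → L)
    (tcomm : ∀ a b : L, tensor a b = tensor b a)
    (tassoc : ∀ a b c : L, tensor (tensor a b) c = tensor a (tensor b c))
    (tone : ∀ a : L, tensor a one = a)
    (resid : ∀ a b c : L, tensor a b ≤ c ↔ b ≤ limp a c)
    (e : A → L) (iota : L → A)
    (emb : ∀ α β : A, e α ≤ e β ↔ α ≤ β)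
    (imono : Monotone iota)
    (isurj : Function.Surjective iota)
    (adj : ∀ (α : A) (a : L), e α ≤ a ↔ α ≤ iota a)
    (retr : ∀ α : A, iota (e α) = α)
    (etensor : ∀ α β : A, tensor (e α) (e β) = e (α ⊓ β))
    (etop : e ⊤ = one) :
    Monotone (fun a : L => e (iota a)) ∧
    (∀ a : L, e (iota a) ≤ a) ∧
    (∀ a : L, e (iota a) ≤ e (iota (e (iota a)))) ∧
    (∀ a b : L, e (iota (a ⊓ b)) = tensor (e (iota a)) (e (iota b))) ∧
    e (iota ⊤) = one := by
  have deflate : ∀ a : L, e (iota a) ≤ a := fun a => (adj _ _).2 le_rfl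
  refine ⟨fun a b h => (emb _ _).2 (imono h), deflate, ?_, ?_, ?_⟩
  · intro a; rw [retr]
  · intro a b
    have h : iota (a ⊓ b) = iota a ⊓ iota b := by
      apply le_antisymm
      · exact le_inf (imono inf_le_left) (imono inf_le_right)
      · rw [← adj]
        exact le_inf (le_trans ((emb _ _).2 inf_le_left) (deflate a))
          (le_trans ((emb _ _).2 inf_le_right) (deflate b))
    rw [h, etensor]
  · have h : iota (⊤ : L) = ⊤ := by
      obtain ⟨x, hx⟩ := isurj ⊤
      exact le_antisymm le_top (hx ▸ imono le_top)
    rw [h, etop]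
end

section
/- Let (L, A, e, ι) be a heterogeneous ILS-algebra. Then ι preserves the Heyting implication up to the linear implication of L: for all α, β ∈ A, α → β = ι(e(α) ⊸ e(β)). -/
/-- In a heterogeneous ILS-algebra, the Heyting implication of `A` is recovered from
the linear implication of `L`: `α ⇨ β = ι (e α ⊸ e β)`. -/
theorem stmt15 {L : Type*} [Lattice L] [BoundedOrder L] {A : Type*} [HeytingAlgebra A]
    (tensor : L → L → L) (one : L) (limp : L → L → L)
    (tcomm : ∀ a b : L, tensor a b = tensor b a)
    (tassoc : ∀ a b c : L, tensor (tensor a b) c = tensor a (tensor b c))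
    (tone : ∀ a : L, tensor a one = a)
    (resid : ∀ a b c : L, tensor a b ≤ c ↔ b ≤ limp a c)
    (e : A → L) (iota : L → A)
    (emb : ∀ α β : A, e α ≤ e β ↔ α ≤ β)
    (imono : Monotone iota)
    (adj : ∀ (α : A) (a : L), e α ≤ a ↔ α ≤ iota a)
    (retr : ∀ α : A, iota (e α) = α)
    (etensor : ∀ α β : A, tensor (e α) (e β) = e (α ⊓ β))
    (etop : e ⊤ = one) :
    ∀ α β : A, α ⇨ β = iota (limp (e α) (e β)) := by
  intro α β
  have tmono2 : ∀ a b b' : L, b ≤ b' → tensor a b ≤ tensor a b' := by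
    intro a b b' h
    exact (resid a b (tensor a b')).mpr (h.trans ((resid a b' (tensor a b')).mp le_rfl))
  apply le_antisymm
  · rw [← adj]
    rw [← resid, tcomm (e α), etensor]
    rw [emb]
    exact himp_inf_le
  · set l := limp (e α) (e β) with hl
    have counit : e (iota l) ≤ l := (adj (iota l) l).mpr le_rfl
    rw [le_himp_iff, ← emb, ← etensor]
    calc tensor (e (iota l)) (e α) = tensor (e α) (e (iota l)) := tcomm _ _
      _ ≤ tensor (e α) l := tmono2 _ _ _ counit
      _ ≤ e β := (resid _ _ _).mpr le_rfl
end

section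
/- In any paired intuitionistic linear algebra (ILP-algebra), for all a, b, c: if ! a ≤ b ⊸ ? c then ! a ≤ ? b ⊸ ? c. -/
/-- In any ILP-algebra: if `! a ≤ b ⊸ ? c` then `! a ≤ ? b ⊸ ? c`. -/
theorem stmt16 {L : Type*} [Lattice L] [BoundedOrder L]
    (tensor : L → L → L) (one : L) (parr : L → L → L) (pbot : L) (limp : L → L → L)
    (tcomm : ∀ a b : L, tensor a b = tensor b a)
    (tassoc : ∀ a b c : L, tensor (tensor a b) c = tensor a (tensor b c))
    (tone : ∀ a : L, tensor a one = a)
    (pcomm : ∀ a b : L, parr a b = parr b a)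
    (passoc : ∀ a b c : L, parr (parr a b) c = parr a (parr b c))
    (pbotu : ∀ a : L, parr a pbot = a)
    (resid : ∀ a b c : L, tensor a b ≤ c ↔ b ≤ limp a c)
    (bang : L → L)
    (bmono : Monotone bang)
    (bdefl : ∀ a : L, bang a ≤ a)
    (bidem : ∀ a : L, bang a ≤ bang (bang a))
    (btensor : ∀ a b : L, tensor (bang a) (bang b) = bang (a ⊓ b))
    (btop : bang ⊤ = one)
    (quest : L → L)
    (qmono : Monotone quest)
    (qinfl : ∀ a : L, a ≤ quest a)
    (qidem : ∀ a : L, quest (quest a) ≤ quest a)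
    (qparr : ∀ a b : L, parr (quest a) (quest b) = quest (a ⊔ b))
    (qbot : quest ⊥ = pbot)
    (pair : ∀ a b : L, bang (limp a b) ≤ limp (quest a) (quest b)) :
    ∀ a b c : L, bang a ≤ limp b (quest c) → bang a ≤ limp (quest b) (quest c) := by
  intro a b c h
  have h1 : bang a ≤ bang (limp b (quest c)) :=
    le_trans (bidem a) (bmono h)
  have h2 : bang a ≤ limp (quest b) (quest (quest c)) :=
    le_trans h1 (pair b (quest c))
  -- limp is monotone in second argument
  have hmono : limp (quest b) (quest (quest c)) ≤ limp (quest b) (quest c) := by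
    rw [← resid]
    exact le_trans ((resid _ _ _).mpr le_rfl) (qidem c)
  exact le_trans h2 hmono
end

section
/- Let (L, A, B, e_!, ι, e_?, γ, ▷) be a heterogeneous ILP-algebra. Then defining ! a := e_!(ι(a)) and ? a := e_?(γ(a)) for all a ∈ L yields an ILP-algebra: in particular the pairing axiom !(a ⊸ b) ≤ ? a ⊸ ? b holds for all a, b ∈ L. -/
/-- From a heterogeneous ILP-algebra `(L, A, B, e_!, ι, e_?, γ, ▷)`, defining
`! a := e_!(ι a)` and `? a := e_?(γ a)` yields an ILP-algebra on `L`; in particular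
the pairing axiom `!(a ⊸ b) ≤ ? a ⊸ ? b` holds. -/
theorem stmt18 {L : Type*} [Lattice L] [BoundedOrder L]
    {A : Type*} [HeytingAlgebra A]
    {B : Type*} [DistribLattice B] [BoundedOrder B]
    (tensor : L → L → L) (one : L) (parr : L → L → L) (pbot : L) (limp : L → L → L)
    (tcomm : ∀ a b : L, tensor a b = tensor b a)
    (tassoc : ∀ a b c : L, tensor (tensor a b) c = tensor a (tensor b c))
    (tone : ∀ a : L, tensor a one = a)
    (pcomm : ∀ a b : L, parr a b = parr b a)
    (passoc : ∀ a b c : L, parr (parr a b) c = parr a (parr b c))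
    (pbotu : ∀ a : L, parr a pbot = a)
    (resid : ∀ a b c : L, tensor a b ≤ c ↔ b ≤ limp a c)
    (pmeet : ∀ a b c : L, parr a (b ⊓ c) = parr a b ⊓ parr a c)
    (ptop : ∀ a : L, parr a ⊤ = ⊤)
    (ebang : A → L) (iota : L → A)
    (embA : ∀ α β : A, ebang α ≤ ebang β ↔ α ≤ β)
    (adjA : ∀ (α : A) (a : L), ebang α ≤ a ↔ α ≤ iota a)
    (retrA : ∀ α : A, iota (ebang α) = α)
    (etensorA : ∀ α β : A, tensor (ebang α) (ebang β) = ebang (α ⊓ β))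
    (etopA : ebang ⊤ = one)
    (equest : B → L) (gamma : L → B)
    (embB : ∀ ξ χ : B, equest ξ ≤ equest χ ↔ ξ ≤ χ)
    (adjB : ∀ (a : L) (ξ : B), gamma a ≤ ξ ↔ a ≤ equest ξ)
    (retrB : ∀ ξ : B, gamma (equest ξ) = ξ)
    (eparrB : ∀ ξ χ : B, parr (equest ξ) (equest χ) = equest (ξ ⊔ χ))
    (ebotB : equest ⊥ = pbot)
    (rhd : A → B → B)
    (rhd_eq : ∀ (α : A) (ξ : B), limp (ebang α) (equest ξ) = equest (rhd α ξ))
    (rhd_le : ∀ a b : L, gamma a ≤ rhd (iota (limp a b)) (gamma b)) :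
    Monotone (fun a : L => ebang (iota a)) ∧
    (∀ a : L, ebang (iota a) ≤ a) ∧
    (∀ a : L, ebang (iota a) ≤ ebang (iota (ebang (iota a)))) ∧
    (∀ a b : L, tensor (ebang (iota a)) (ebang (iota b)) = ebang (iota (a ⊓ b))) ∧
    (ebang (iota ⊤) = one) ∧
    Monotone (fun a : L => equest (gamma a)) ∧
    (∀ a : L, a ≤ equest (gamma a)) ∧
    (∀ a : L, equest (gamma (equest (gamma a))) ≤ equest (gamma a)) ∧
    (∀ a b : L, parr (equest (gamma a)) (equest (gamma b)) = equest (gamma (a ⊔ b))) ∧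
    (equest (gamma ⊥) = pbot) ∧
    (∀ a b : L,
      ebang (iota (limp a b)) ≤ limp (equest (gamma a)) (equest (gamma b))) := by

  have bangle : ∀ a : L, ebang (iota a) ≤ a := fun a => (adjA _ _).2 le_rfl
  have imono : ∀ a b : L, a ≤ b → iota a ≤ iota b := fun a b h =>
    (adjA _ _).1 ((bangle a).trans h)
  have gmono : ∀ a b : L, a ≤ b → gamma a ≤ gamma b := fun a b h =>
    (adjB _ _).2 (h.trans ((adjB _ _).1 le_rfl))
  have qle : ∀ a : L, a ≤ equest (gamma a) := fun a => (adjB _ _).1 le_rfl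
  refine ⟨fun a b h => (embA _ _).2 (imono a b h),
    bangle,
    fun a => (embA _ _).2 (by rw [retrA]),
    fun a b => ?_,
    ?_,
    fun a b h => (embB _ _).2 (gmono a b h),
    qle,
    fun a => (embB _ _).2 (by rw [retrB]),
    fun a b => ?_,
    ?_,
    fun a b => ?_⟩
  · rw [etensorA]
    congr 1
    apply le_antisymm
    · exact (adjA _ _).1 (le_inf ((bangle a).trans' ((embA _ _).2 inf_le_left))
        ((bangle b).trans' ((embA _ _).2 inf_le_right)))
    · exact le_inf (imono _ _ inf_le_left) (imono _ _ inf_le_right)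
  · have : iota (⊤ : L) = ⊤ := le_antisymm le_top ((adjA _ _).1 le_top)
    rw [this, etopA]
  · rw [eparrB]
    congr 1
    apply le_antisymm
    · exact sup_le (gmono _ _ le_sup_left) (gmono _ _ le_sup_right)
    · exact (adjB _ _).2 (sup_le ((qle a).trans ((embB _ _).2 le_sup_left))
        ((qle b).trans ((embB _ _).2 le_sup_right)))
  · have : gamma (⊥ : L) = ⊥ := le_antisymm ((adjB _ _).2 bot_le) bot_le
    rw [this, ebotB]
  · rw [← resid, tcomm, resid]
    calc equest (gamma a) ≤ equest (rhd (iota (limp a b)) (gamma b)) :=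
          (embB _ _).2 (rhd_le a b)
      _ = limp (ebang (iota (limp a b))) (equest (gamma b)) := (rhd_eq _ _).symm
end
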